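/- Sign identity for the join homomorphism: for finite sets B = B₁ ⊎ B₂ ⊆ D and E = E₁ ⊎ E₂ ⊆ U∖D with D ∩ E = ∅, it holds that I(B₁,E₂)·I(E₁,B₂)·I(B,E) = I(B₁,E₁)·I(B₂,E₂)·(-1)^(|E₁|·|B₂|). -/
import Mathlib


/-- `I A B = (-1)^|{(a,b) ∈ A × B : a > b}|`. -/
def Isgn (A B : Finset ℕ) : ℤ :=
  (-1) ^ ((A ×ˢ B).filter (fun p => p.2 < p.1)).card

lemma Isgn_union_left (A A' B : Finset ℕ) (h : Disjoint A A') :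
    Isgn (A ∪ A') B = Isgn A B * Isgn A' B := by
  unfold Isgn
  rw [← pow_add]
  congr 1
  rw [Finset.union_product, Finset.filter_union, Finset.card_union_of_disjoint]
  apply Finset.disjoint_filter_filter
  rw [Finset.disjoint_left]
  intro p hp hp'
  simp only [Finset.mem_product] at hp hp'
  exact (Finset.disjoint_left.mp h hp.1) hp'.1

lemma Isgn_union_right (A B B' : Finset ℕ) (h : Disjoint B B') :
    Isgn A (B ∪ B') = Isgn A B * Isgn A B' := by
  unfold Isgn
  rw [← pow_add]
  congr 1
  rw [Finset.product_union, Finset.filter_union, Finset.card_union_of_disjoint]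
  apply Finset.disjoint_filter_filter
  rw [Finset.disjoint_left]
  intro p hp hp'
  simp only [Finset.mem_product] at hp hp'
  exact (Finset.disjoint_left.mp h hp.2) hp'.2

lemma Isgn_sq (A B : Finset ℕ) : Isgn A B * Isgn A B = 1 := by
  unfold Isgn
  rw [← pow_add, ← two_mul, pow_mul]
  norm_num

lemma Isgn_swap (A B : Finset ℕ) (h : Disjoint A B) :
    Isgn A B * Isgn B A = (-1) ^ (A.card * B.card) := by
  unfold Isgn
  rw [← pow_add]
  congr 1
  have h1 : ((B ×ˢ A).filter (fun p => p.2 < p.1)).card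
      = ((A ×ˢ B).filter (fun p => p.1 < p.2)).card := by
    apply Finset.card_bij' (fun p _ => Prod.swap p) (fun p _ => Prod.swap p)
    · intro p hp
      simp only [Finset.mem_filter, Finset.mem_product] at hp ⊢
      exact ⟨⟨hp.1.2, hp.1.1⟩, hp.2⟩
    · intro p hp
      simp only [Finset.mem_filter, Finset.mem_product] at hp ⊢
      exact ⟨⟨hp.1.2, hp.1.1⟩, hp.2⟩
    · intro p _; simp
    · intro p _; simp
  rw [h1]
  have h2 : (A ×ˢ B).filter (fun p => ¬ p.2 < p.1)
      = (A ×ˢ B).filter (fun p => p.1 < p.2) := by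
    apply Finset.filter_congr
    intro p hp
    simp only [Finset.mem_product] at hp
    have hne : p.1 ≠ p.2 := fun he => (Finset.disjoint_left.mp h hp.1) (he ▸ hp.2)
    simp only [not_lt, eq_iff_iff]
    constructor
    · intro hle; exact lt_of_le_of_ne hle hne
    · exact le_of_lt
  rw [← h2, Finset.card_filter_add_card_filter_not, Finset.card_product]

theorem join_sign_identity (B₁ B₂ E₁ E₂ : Finset ℕ)
    (hB : Disjoint B₁ B₂) (hE : Disjoint E₁ E₂)
    (hBE : Disjoint (B₁ ∪ B₂) (E₁ ∪ E₂)) :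
    Isgn B₁ E₂ * Isgn E₁ B₂ * Isgn (B₁ ∪ B₂) (E₁ ∪ E₂)
      = Isgn B₁ E₁ * Isgn B₂ E₂ * (-1) ^ (E₁.card * B₂.card) := by
  have hE1B2 : Disjoint E₁ B₂ :=
    (Finset.disjoint_union_right.mp (Finset.disjoint_union_left.mp hBE.symm).1).2
  rw [Isgn_union_left _ _ _ hB, Isgn_union_right _ _ _ hE, Isgn_union_right _ _ _ hE]
  have h1 := Isgn_swap E₁ B₂ hE1B2
  have h2 := Isgn_sq B₁ E₂
  rw [Nat.mul_comm E₁.card B₂.card] at h1 ⊢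
  calc Isgn B₁ E₂ * Isgn E₁ B₂ * (Isgn B₁ E₁ * Isgn B₁ E₂ * (Isgn B₂ E₁ * Isgn B₂ E₂))
      = Isgn B₁ E₁ * Isgn B₂ E₂ * (Isgn B₁ E₂ * Isgn B₁ E₂) * (Isgn E₁ B₂ * Isgn B₂ E₁) := by
        ring
    _ = Isgn B₁ E₁ * Isgn B₂ E₂ * (-1) ^ (B₂.card * E₁.card) := by
        rw [h2, ← h1]; ring
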